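/- arXiv:2305.19680 — 6 statements merged into one kernel-verified Lean document; each statement's English description precedes it below -/
import Mathlib

section
/- With the notation of the preceding summation-by-parts identity, if additionally the sequence (ζ_n − ζ_{n-1}) is absolutely summable, the ζ_n are bounded, and Im θ_n ≥ 0 for all n (so that Im φ_n is nondecreasing), then there is a constant C independent of n and m such that |∑_{p=n}^{m} κ_p e^{−iφ_p}| ≤ C e^{Im φ_{m+1}} for all m ≥ n. -/
/-!
Since `κ_p = ζ_p (e^{-iθ_p} - 1)`, each term `κ_p e^{-iφ_p}` equals `ζ_p (e^{-iφ_{p+1}} - e^{-iφ_p})`,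
and Abel summation turns the sum into two boundary terms `ζ_m e^{-iφ_{m+1}}`, `ζ_{n-1} e^{-iφ_n}` and
`∑ (ζ_p - ζ_{p-1}) e^{-iφ_p}`. As `|e^{-iφ_p}| = e^{Im φ_p}` is nondecreasing, every weight is at most
`e^{Im φ_{m+1}}`, so the sum is bounded by `(2 sup |ζ| + ∑ |ζ_p - ζ_{p-1}|) e^{Im φ_{m+1}}`.
-/

open Finset Complex

theorem Int.sum_Icc_mul_sub_by_parts {R : Type*} [Ring R] (a w : ℤ → R) {n m : ℤ} (h : n ≤ m) :
    ∑ p ∈ Icc n m, a p * (w (p + 1) - w p) =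
      a m * w (m + 1) - a (n - 1) * w n - ∑ p ∈ Icc n m, (a p - a (p - 1)) * w p := by
  induction m, h using Int.leInduction with
  | base => simp only [Icc_self, sum_singleton]; noncomm_ring
  | succ m hm ih =>
    rw [← insert_Icc_right_eq_Icc_add_one (by omega), sum_insert (by simp),
      sum_insert (by simp), ih]
    simp only [add_sub_cancel_right]
    noncomm_ring

theorem Int.norm_sum_Icc_mul_sub_le {R : Type*} [SeminormedRing R] (a w : ℤ → R) {B W : ℝ}
    (ha : ∀ p, ‖a p‖ ≤ B) (hsum : Summable fun p => ‖a p - a (p - 1)‖) {n m : ℤ} (h : n ≤ m)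
    (hw : ∀ p ∈ Icc n (m + 1), ‖w p‖ ≤ W) :
    ‖∑ p ∈ Icc n m, a p * (w (p + 1) - w p)‖ ≤ (2 * B + ∑' p, ‖a p - a (p - 1)‖) * W := by
  have hB : 0 ≤ B := (norm_nonneg _).trans (ha 0)
  have hW : 0 ≤ W := (norm_nonneg _).trans (hw n (mem_Icc.2 ⟨le_rfl, by omega⟩))
  have hmul : ∀ p q, q ∈ Icc n (m + 1) → ‖a p * w q‖ ≤ B * W := fun p q hq =>
    (norm_mul_le _ _).trans (mul_le_mul (ha p) (hw q hq) (norm_nonneg _) hB)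
  have hdiff : ‖∑ p ∈ Icc n m, (a p - a (p - 1)) * w p‖ ≤ (∑' p, ‖a p - a (p - 1)‖) * W :=
    calc ‖∑ p ∈ Icc n m, (a p - a (p - 1)) * w p‖
        ≤ ∑ p ∈ Icc n m, ‖a p - a (p - 1)‖ * W := by
          refine (norm_sum_le _ _).trans (sum_le_sum fun p hp => ?_)
          refine (norm_mul_le _ _).trans (mul_le_mul_of_nonneg_left (hw p ?_) (norm_nonneg _))
          simp only [mem_Icc] at hp ⊢; omega
      _ ≤ (∑' p, ‖a p - a (p - 1)‖) * W := by
          rw [← sum_mul]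
          exact mul_le_mul_of_nonneg_right
            (hsum.sum_le_tsum _ fun p _ => norm_nonneg _) hW
  rw [Int.sum_Icc_mul_sub_by_parts a w h]
  calc _ ≤ ‖a m * w (m + 1)‖ + ‖a (n - 1) * w n‖
          + ‖∑ p ∈ Icc n m, (a p - a (p - 1)) * w p‖ :=
        (norm_sub_le _ _).trans (add_le_add_left (norm_sub_le _ _) _)
    _ ≤ B * W + B * W + (∑' p, ‖a p - a (p - 1)‖) * W := by
        gcongr
        · exact hmul _ _ (mem_Icc.2 ⟨by omega, by omega⟩)
        · exact hmul _ _ (mem_Icc.2 ⟨by omega, by omega⟩)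
    _ = _ := by ring

theorem Complex.norm_exp_neg_I_mul (z : ℂ) : ‖exp (-I * z)‖ = Real.exp z.im := by
  simp [norm_exp]

theorem Complex.mul_exp_neg_I_mul_eq {κ ζ φ φ' : ℂ} (hexp : exp (-I * (φ' - φ)) ≠ 1)
    (hζ : ζ = κ / (exp (-I * (φ' - φ)) - 1)) :
    κ * exp (-I * φ) = ζ * (exp (-I * φ') - exp (-I * φ)) := by
  have hφ' : exp (-I * φ') = exp (-I * (φ' - φ)) * exp (-I * φ) := by
    rw [← exp_add]; ring_nf
  rw [hφ', ← sub_one_mul, ← mul_assoc, hζ, div_mul_cancel₀ _ (sub_ne_zero.2 hexp)]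

/-- Estimate of oscillating sums: if the differences `ζ_n − ζ_{n-1}` are
absolutely summable, the `ζ_n` are bounded, and `Im θ_n ≥ 0` (so `Im φ_n` is
nondecreasing), then `|∑_{p=n}^{m} κ_p e^{−iφ_p}| ≤ C e^{Im φ_{m+1}}` with `C`
independent of `n` and `m`. -/
theorem oscillating_sum_estimate (κ φ : ℤ → ℂ)
    (hexp : ∀ n : ℤ, Complex.exp (-I * (φ (n + 1) - φ n)) ≠ 1)
    (ζ : ℤ → ℂ)
    (hζ : ∀ n : ℤ, ζ n = κ n / (Complex.exp (-I * (φ (n + 1) - φ n)) - 1))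
    (hsum : Summable fun n : ℤ => ‖ζ n - ζ (n - 1)‖)
    (hbdd : ∃ B : ℝ, ∀ n : ℤ, ‖ζ n‖ ≤ B)
    (him : ∀ n : ℤ, 0 ≤ (φ (n + 1) - φ n).im) :
    ∃ C : ℝ, ∀ n m : ℤ, n ≤ m →
      ‖∑ p ∈ Finset.Icc n m, κ p * Complex.exp (-I * φ p)‖
        ≤ C * Real.exp ((φ (m + 1)).im) := by
  obtain ⟨B, hB⟩ := hbdd
  have hmono : Monotone fun p => (φ p).im :=
    monotone_int_of_le_succ fun p => sub_nonneg.1 (by simpa only [sub_im] using him p)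
  refine ⟨2 * B + ∑' p, ‖ζ p - ζ (p - 1)‖, fun n m hnm => ?_⟩
  rw [sum_congr rfl fun p _ => mul_exp_neg_I_mul_eq (hexp p) (hζ p)]
  refine Int.norm_sum_Icc_mul_sub_le ζ (fun p => exp (-I * φ p)) hB hsum hnm fun p hp => ?_
  rw [norm_exp_neg_I_mul]
  exact Real.exp_le_exp.2 (hmono (mem_Icc.1 hp).2)
end

section
/- Under the assumption that h_m := sup_{n≤m-1}|G_{n,m} R_m| is summable, the discrete Volterra equation u_n = 1 + ∑_{m=n+1}^{∞} G_{n,m} R_m u_m has a bounded solution u_n (given by the series u_n = ∑_{k≥0} u_n^{(k)} of iterates), and this solution satisfies |u_n − 1| ≤ e^{H_n} − 1 where H_n = ∑_{p=n+1}^∞ h_p. In particular u_n → 1 as n → ∞. -/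
set_option maxHeartbeats 1000000

open Filter

private lemma volterra_tail_eq (h : ℕ → ℝ) (n : ℕ) :
    (∑' p : ℕ, if n < p then h p else 0) = ∑' q : ℕ, h (q + (n+1)) := by
  symm
  have hinj : Function.Injective (fun q : ℕ => q + (n+1)) := fun a b hab => by
    simpa using hab
  have hsupp : Function.support (fun p => if n < p then h p else 0) ⊆
      Set.range (fun q : ℕ => q + (n+1)) := by
    intro p hp
    simp only [Function.mem_support, ne_eq, ite_eq_right_iff, not_forall] at hp
    obtain ⟨hnp, -⟩ := hp
    exact ⟨p - (n+1), by simp; omega⟩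
  have := hinj.tsum_eq (f := fun p => if n < p then h p else 0) hsupp
  rw [← this]
  refine tsum_congr fun q => ?_
  simp only [if_pos (by omega : n < q + (n+1))]

private lemma volterra_pow_ineq (k : ℕ) {a b : ℝ} (hb : 0 ≤ b) (hab : b ≤ a) :
    (k+1 : ℝ) * b ^ k * (a - b) ≤ a ^ (k+1) - b ^ (k+1) := by
  rw [← geom_sum₂_mul a b (k+1)]
  refine mul_le_mul_of_nonneg_right ?_ (by linarith)
  calc (k+1 : ℝ) * b ^ k = ∑ _i ∈ Finset.range (k+1), b ^ k := by
        simp [mul_comm]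
    _ ≤ ∑ i ∈ Finset.range (k+1), a ^ i * b ^ (k - i) := by
        refine Finset.sum_le_sum fun i hi => ?_
        have hik : i ≤ k := by simpa [Nat.lt_succ_iff] using hi
        have hbk : b ^ k = b ^ i * b ^ (k - i) := by
          rw [← pow_add]; congr 1; omega
        rw [hbk]
        exact mul_le_mul_of_nonneg_right (pow_le_pow_left₀ hb hab i) (pow_nonneg hb _)
    _ = ∑ i ∈ Finset.range (k+1), a ^ i * b ^ (k + 1 - 1 - i) := by simp

noncomputable def volterraIter (G : ℕ → ℕ → ℂ) (R : ℕ → ℂ) : ℕ → ℕ → ℂ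
  | 0, _ => 1
  | (k+1), n => ∑' m : ℕ, if n < m then G n m * R m * volterraIter G R k m else 0

/-- Solvability of the discrete Volterra equation
`u_n = 1 + ∑_{m>n} G_{n,m} R_m u_m`: under the summability assumption on
`h_m ≥ |G_{n,m} R_m|` there is a bounded solution with
`|u_n − 1| ≤ e^{H_n} − 1`, where `H_n = ∑_{p>n} h_p`; in particular `u_n → 1`. -/
theorem volterra_solution_exists (G : ℕ → ℕ → ℂ) (R : ℕ → ℂ) (h : ℕ → ℝ)
    (hpos : ∀ m, 0 ≤ h m) (hsum : Summable h)
    (hGR : ∀ n m : ℕ, n + 1 ≤ m → ‖G n m * R m‖ ≤ h m)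
    (H : ℕ → ℝ) (hH : ∀ n, H n = ∑' p : ℕ, if n < p then h p else 0) :
    ∃ u : ℕ → ℂ,
      (∃ C : ℝ, ∀ n, ‖u n‖ ≤ C) ∧
      (∀ n : ℕ, Summable (fun m : ℕ => if n < m then G n m * R m * u m else 0)) ∧
      (∀ n : ℕ, u n = 1 + ∑' m : ℕ, if n < m then G n m * R m * u m else 0) ∧
      (∀ n : ℕ, ‖u n - 1‖ ≤ Real.exp (H n) - 1) ∧
      Tendsto u atTop (nhds 1) := by
  set v := volterraIter G R with hvdef
  have hv0 : ∀ n, v 0 n = 1 := fun n => rfl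
  have hvs : ∀ k n, v (k+1) n = ∑' m : ℕ, if n < m then G n m * R m * v k m else 0 :=
    fun k n => rfl
  have htail : ∀ n, H n = ∑' q : ℕ, h (q + (n+1)) := fun n => by
    rw [hH n, volterra_tail_eq]
  have htails : ∀ n : ℕ, Summable (fun q : ℕ => h (q + (n+1))) := fun n =>
    (summable_nat_add_iff (n+1)).mpr hsum
  have hH0 : ∀ n, 0 ≤ H n := fun n => by
    rw [htail n]; exact tsum_nonneg fun q => hpos _
  have hstep : ∀ n, H n = h (n+1) + H (n+1) := by
    intro n
    rw [htail n, htail (n+1), Summable.tsum_eq_zero_add (htails n)]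
    congr 1
    · simp
    · exact tsum_congr fun q => by congr 1; omega
  have hanti : Antitone H := by
    refine antitone_nat_of_succ_le fun n => ?_
    rw [hstep n]; linarith [hpos (n+1)]
  have hHtop : ∀ n, H n ≤ H 0 := fun n => hanti (Nat.zero_le n)
  have hHlim : Tendsto H atTop (nhds 0) := by
    have h1 : Tendsto (fun i : ℕ => ∑' q : ℕ, h (q + i)) atTop (nhds 0) :=
      tendsto_sum_nat_add h
    have h2 : Tendsto (fun n : ℕ => ∑' q : ℕ, h (q + (n+1))) atTop (nhds 0) :=
      h1.comp (tendsto_add_atTop_nat 1)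
    exact (h2.congr fun n => (htail n).symm)
  -- key bound on iterates
  have hvb : ∀ k n, ‖v k n‖ ≤ H n ^ k / (Nat.factorial k) := by
    intro k
    induction k with
    | zero => intro n; simp [hv0]
    | succ k ih =>
      intro n
      have hkf : (0:ℝ) < (Nat.factorial k : ℝ) := by positivity
      set g : ℕ → ℝ := fun m => if n < m then h m * (H m ^ k / (Nat.factorial k)) else 0
        with hg
      have hgnn : ∀ m, 0 ≤ g m := by
        intro m; rw [hg]; dsimp only
        split
        · exact mul_nonneg (hpos m) (div_nonneg (pow_nonneg (hH0 m) k) hkf.le)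
        · exact le_refl 0
      have hgle : ∀ m, g m ≤ h m * (H 0 ^ k / (Nat.factorial k)) := by
        intro m; rw [hg]; dsimp only
        split
        · refine mul_le_mul_of_nonneg_left ?_ (hpos m)
          exact div_le_div_of_nonneg_right
            (pow_le_pow_left₀ (hH0 m) (hHtop m) k) hkf.le
        · exact mul_nonneg (hpos m) (div_nonneg (pow_nonneg (hH0 0) k) hkf.le)
      have hgsum : Summable g :=
        Summable.of_nonneg_of_le hgnn hgle (hsum.mul_right _)
      have hnorm : ∀ m, ‖(if n < m then G n m * R m * v k m else 0 : ℂ)‖ ≤ g m := by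
        intro m
        by_cases hm : n < m
        · rw [if_pos hm, hg]; dsimp only; rw [if_pos hm, norm_mul]
          exact mul_le_mul (hGR n m hm) (ih m) (norm_nonneg _) (hpos m)
        · rw [if_neg hm]; simpa using hgnn m
      have hfn : Summable (fun m => ‖(if n < m then G n m * R m * v k m else 0 : ℂ)‖) :=
        Summable.of_nonneg_of_le (fun m => norm_nonneg _) hnorm hgsum
      have h1 : ‖v (k+1) n‖ ≤ ∑' m, g m := by
        rw [hvs]
        exact (norm_tsum_le_tsum_norm hfn).trans (Summable.tsum_le_tsum hnorm hfn.of_norm.norm hgsum)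
      -- telescoping bound on ∑' g
      set t : ℕ → ℝ := fun m => if n < m then h m * H m ^ k else 0 with ht
      have htnn : ∀ m, 0 ≤ t m := by
        intro m; rw [ht]; dsimp only
        split
        · exact mul_nonneg (hpos m) (pow_nonneg (hH0 m) k)
        · exact le_refl 0
      have hgt : ∀ m, g m = (1 / (Nat.factorial k : ℝ)) * t m := by
        intro m; rw [hg, ht]; dsimp only
        split
        · ring
        · ring
      have htsum : Summable t := by
        refine (hgsum.mul_left (Nat.factorial k : ℝ)).congr fun m => ?_
        rw [hgt m]; field_simp
      have hterm : ∀ p, t (p+1) ≤ (H p ^ (k+1) - H (p+1) ^ (k+1)) / (k+1) := by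
        intro p
        have hab : H (p+1) ≤ H p := hanti (Nat.le_succ p)
        have key := volterra_pow_ineq k (hH0 (p+1)) hab
        rw [le_div_iff₀ (by positivity : (0:ℝ) < (k:ℝ)+1)]
        calc t (p+1) * ((k:ℝ)+1) ≤ h (p+1) * H (p+1) ^ k * ((k:ℝ)+1) := by
              rw [ht]; dsimp only
              split
              · exact le_refl _
              · rw [zero_mul]
                exact mul_nonneg (mul_nonneg (hpos _) (pow_nonneg (hH0 _) k))
                  (by positivity)
          _ = ((k:ℝ)+1) * H (p+1) ^ k * (H p - H (p+1)) := by
              have := hstep p; rw [show h (p+1) = H p - H (p+1) by linarith]; ring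
          _ ≤ H p ^ (k+1) - H (p+1) ^ (k+1) := by exact_mod_cast key
      have hpartial : ∀ N : ℕ, ∑ m ∈ Finset.Ioc n (n+N), t m ≤
          (H n ^ (k+1) - H (n+N) ^ (k+1)) / (k+1) := by
        intro N
        induction N with
        | zero => simp
        | succ N ihN =>
          rw [show n + (N+1) = (n+N) + 1 by ring,
            Finset.sum_Ioc_succ_top (Nat.le_add_right n N)]
          have h2 := hterm (n+N)
          have h3 : ((H n ^ (k+1) - H (n+N) ^ (k+1)) / (k+1) : ℝ) +
              (H (n+N) ^ (k+1) - H (n+N+1) ^ (k+1)) / (k+1) =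
              (H n ^ (k+1) - H (n+N+1) ^ (k+1)) / (k+1) := by ring
          have := add_le_add ihN h2
          rw [h3] at this
          convert this using 3 <;> omega
      have hkey2 : ∑' m, t m ≤ H n ^ (k+1) / (k+1) := by
        refine Summable.tsum_le_of_sum_le htsum fun s => ?_
        obtain ⟨M, hM⟩ := s.exists_nat_subset_range
        have hsub : s ⊆ Finset.range (n+M+1) := hM.trans (by
          intro x hx; simp only [Finset.mem_range] at hx ⊢; omega)
        calc ∑ m ∈ s, t m ≤ ∑ m ∈ Finset.range (n+M+1), t m :=
              Finset.sum_le_sum_of_subset_of_nonneg hsub (fun i _ _ => htnn i)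
          _ = ∑ m ∈ Finset.Ioc n (n+M), h m * H m ^ k := by
              rw [ht]
              rw [← Finset.sum_filter (fun m => n < m) (fun m => h m * H m ^ k)]
              congr 1
              ext x
              simp only [Finset.mem_filter, Finset.mem_range, Finset.mem_Ioc]
              omega
          _ = ∑ m ∈ Finset.Ioc n (n+M), t m := by
              refine Finset.sum_congr rfl fun m hm => ?_
              rw [ht]; dsimp only
              rw [if_pos (Finset.mem_Ioc.mp hm).1]
          _ ≤ (H n ^ (k+1) - H (n+M) ^ (k+1)) / (k+1) := hpartial M
          _ ≤ H n ^ (k+1) / (k+1) := by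
              have h5 : H n ^ (k+1) - H (n+M) ^ (k+1) ≤ H n ^ (k+1) := by
                nlinarith [pow_nonneg (hH0 (n+M)) (k+1)]
              exact div_le_div_of_nonneg_right h5 (by positivity)
      have h4 : ∑' m, g m ≤ H n ^ (k+1) / (Nat.factorial (k+1)) := by
        calc ∑' m, g m = (1 / (Nat.factorial k : ℝ)) * ∑' m, t m := by
              rw [← tsum_mul_left]; exact tsum_congr hgt
          _ ≤ (1 / (Nat.factorial k : ℝ)) * (H n ^ (k+1) / (k+1)) :=
              mul_le_mul_of_nonneg_left hkey2 (by positivity)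
          _ = H n ^ (k+1) / (Nat.factorial (k+1)) := by
              rw [show ((Nat.factorial (k+1) : ℝ)) = ((k:ℝ)+1) * (Nat.factorial k : ℝ) by
                push_cast [Nat.factorial_succ]; ring]
              rw [one_div_mul_eq_div, div_div]
      exact h1.trans h4
  -- exp as a series
  have hexp : ∀ x : ℝ, Real.exp x = ∑' j : ℕ, x ^ j / (Nat.factorial j) := by
    intro x
    rw [Real.exp_eq_exp_ℝ, NormedSpace.exp_eq_tsum_div]
  have hnormsum : ∀ n, Summable (fun k => ‖v k n‖) := fun n =>
    Summable.of_nonneg_of_le (fun k => norm_nonneg _) (fun k => hvb k n)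
      (Real.summable_pow_div_factorial (H n))
  have hsumk : ∀ n, Summable (fun k => v k n) := fun n => (hnormsum n).of_norm
  -- the solution
  refine ⟨fun n => ∑' k, v k n, ?_⟩
  set u : ℕ → ℂ := fun n => ∑' k, v k n with hu
  have hub : ∀ n, ‖u n‖ ≤ Real.exp (H n) := by
    intro n
    rw [hu]
    calc ‖∑' k, v k n‖ ≤ ∑' k, ‖v k n‖ := norm_tsum_le_tsum_norm (hnormsum n)
      _ ≤ ∑' k : ℕ, H n ^ k / (Nat.factorial k) :=
          Summable.tsum_le_tsum (fun k => hvb k n) (hnormsum n) (Real.summable_pow_div_factorial _)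
      _ = Real.exp (H n) := (hexp (H n)).symm
  have hu1 : ∀ n, ‖u n - 1‖ ≤ Real.exp (H n) - 1 := by
    intro n
    have hdiff : u n - 1 = ∑' k, v (k+1) n := by
      rw [hu]; dsimp only
      rw [Summable.tsum_eq_zero_add (hsumk n), hv0]; ring
    have hns : Summable (fun k => ‖v (k+1) n‖) := (summable_nat_add_iff (f := fun j => ‖v j n‖) 1).mpr (hnormsum n)
    have hps : Summable (fun k : ℕ => H n ^ (k+1) / (Nat.factorial (k+1))) :=
      (summable_nat_add_iff (f := fun j : ℕ => H n ^ j / (Nat.factorial j)) 1).mpr (Real.summable_pow_div_factorial (H n))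
    have hsum1 : (∑' k : ℕ, H n ^ (k+1) / (Nat.factorial (k+1))) = Real.exp (H n) - 1 := by
      have := hexp (H n)
      rw [Summable.tsum_eq_zero_add (Real.summable_pow_div_factorial (H n))] at this
      simp only [pow_zero, Nat.factorial_zero, Nat.cast_one, div_one] at this
      linarith
    rw [hdiff]
    calc ‖∑' k, v (k+1) n‖ ≤ ∑' k, ‖v (k+1) n‖ := norm_tsum_le_tsum_norm hns
      _ ≤ ∑' k : ℕ, H n ^ (k+1) / (Nat.factorial (k+1)) :=
          Summable.tsum_le_tsum (fun k => hvb (k+1) n) hns hps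
      _ = Real.exp (H n) - 1 := hsum1
  -- summability of the Volterra series with u
  have hsum2 : ∀ n : ℕ, Summable (fun m : ℕ => if n < m then G n m * R m * u m else 0) := by
    intro n
    apply Summable.of_norm
    refine Summable.of_nonneg_of_le (fun m => norm_nonneg _) ?_ (hsum.mul_right (Real.exp (H 0)))
    intro m
    by_cases hm : n < m
    · rw [if_pos hm, norm_mul]
      have h1 : ‖u m‖ ≤ Real.exp (H 0) := (hub m).trans (Real.exp_le_exp.mpr (hHtop m))
      exact mul_le_mul (hGR n m hm) h1 (norm_nonneg _) (hpos m)
    · rw [if_neg hm]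
      simp only [norm_zero]
      exact mul_nonneg (hpos m) (Real.exp_nonneg _)
  -- the equation
  have hequation : ∀ n : ℕ, u n = 1 + ∑' m : ℕ, if n < m then G n m * R m * u m else 0 := by
    intro n
    set f : ℕ → ℕ → ℂ := fun k m => if n < m then G n m * R m * v k m else 0 with hf
    have hbound : ∀ k m, ‖f k m‖ ≤ (H 0 ^ k / (Nat.factorial k)) * h m := by
      intro k m
      rw [hf]; dsimp only
      by_cases hm : n < m
      · rw [if_pos hm, norm_mul]
        have h1 : ‖v k m‖ ≤ H 0 ^ k / (Nat.factorial k) :=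
          (hvb k m).trans (div_le_div_of_nonneg_right
            (pow_le_pow_left₀ (hH0 m) (hHtop m) k) (by positivity))
        calc ‖G n m * R m‖ * ‖v k m‖ ≤ h m * (H 0 ^ k / (Nat.factorial k)) :=
              mul_le_mul (hGR n m hm) h1 (norm_nonneg _) (hpos m)
          _ = (H 0 ^ k / (Nat.factorial k)) * h m := by ring
      · rw [if_neg hm]
        simp only [norm_zero]
        have : (0:ℝ) ≤ H 0 ^ k / (Nat.factorial k) := by
          have := hH0 0; positivity
        exact mul_nonneg this (hpos m)
    have hFsum : Summable (Function.uncurry f) := by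
      apply Summable.of_norm
      refine Summable.of_nonneg_of_le (fun p => norm_nonneg _) (fun p => hbound p.1 p.2) ?_
      exact (Real.summable_pow_div_factorial (H 0)).mul_of_nonneg hsum
        (fun k => by have := hH0 0; positivity) hpos
    have hrow : ∀ k, Summable (f k) := by
      intro k
      apply Summable.of_norm
      exact Summable.of_nonneg_of_le (fun m => norm_nonneg _) (hbound k)
        (hsum.mul_left _)
    have hcol : ∀ m, Summable (fun k => f k m) := by
      intro m
      rw [hf]
      by_cases hm : n < m
      · simp only [if_pos hm]
        exact (hsumk m).mul_left _
      · simp only [if_neg hm]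
        exact summable_zero
    have hswap : (∑' k, ∑' m, f k m) = ∑' m, ∑' k, f k m :=
      (Summable.tsum_comm' hFsum hrow hcol).symm
    have hinner : ∀ m, (∑' k, f k m) = if n < m then G n m * R m * u m else 0 := by
      intro m
      rw [hf]
      by_cases hm : n < m
      · simp only [if_pos hm]
        exact tsum_mul_left
      · simp only [if_neg hm]
        exact tsum_zero
    calc u n = ∑' k, v k n := rfl
      _ = v 0 n + ∑' k, v (k+1) n := Summable.tsum_eq_zero_add (hsumk n)
      _ = 1 + ∑' k, ∑' m, f k m := by
          rw [hv0]
          congr 1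
      _ = 1 + ∑' m, ∑' k, f k m := by rw [hswap]
      _ = 1 + ∑' m : ℕ, if n < m then G n m * R m * u m else 0 := by
          rw [tsum_congr hinner]
  -- limit
  have hlim : Tendsto u atTop (nhds 1) := by
    rw [tendsto_iff_norm_sub_tendsto_zero]
    have h2 : Tendsto (fun n => Real.exp (H n) - 1) atTop (nhds 0) := by
      have h3 : Tendsto (fun n => Real.exp (H n)) atTop (nhds (Real.exp 0)) :=
        (Real.continuous_exp.tendsto 0).comp hHlim
      have h4 := h3.sub (tendsto_const_nhds (x := (1:ℝ)))
      simpa using h4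
    exact squeeze_zero (fun n => norm_nonneg _) hu1 h2
  exact ⟨⟨Real.exp (H 0), fun n => (hub n).trans (Real.exp_le_exp.mpr (hHtop n))⟩,
    hsum2, hequation, hu1, hlim⟩
end

section
/- Under the assumption that h_m := sup_{n≤m-1}|G_{n,m} R_m| is summable, any bounded sequence (v_n) satisfying the homogeneous Volterra equation v_n = ∑_{m=n+1}^{∞} G_{n,m} R_m v_m is identically zero. Consequently the bounded solution of the inhomogeneous equation u_n = 1 + ∑_{m>n} G_{n,m} R_m u_m is unique. -/
open Filter Topology

/-!
Writing `a n = ‖v n‖`, the equation gives `a n ≤ ∑_{m > n} h m * a m` with `a ≤ C`. Once the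
tails `∑_{m > n} h m` are at most `1 / 2` for `n ≥ N`, iterating gives `a n ≤ C / 2 ^ k` for all
`k` and `n ≥ N`, so `a` vanishes from `N` on; below `N` it then vanishes by downward induction,
since each `a n` is controlled by later terms only.
-/

theorem tsum_ite_lt_eq_tsum_nat_add {M : Type*} [AddCommMonoid M] [TopologicalSpace M]
    [ContinuousAdd M] [T2Space M] {f : ℕ → M} {n : ℕ}
    (hf : Summable fun k => f (k + (n + 1))) :
    ∑' m, (if n < m then f m else 0) = ∑' k, f (k + (n + 1)) := by
  have hshift : (fun k => if n < k + (n + 1) then f (k + (n + 1)) else 0)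
      = fun k => f (k + (n + 1)) := funext fun k => if_pos (by omega)
  have hrange : ∑ m ∈ Finset.range (n + 1), (if n < m then f m else 0) = 0 :=
    Finset.sum_eq_zero fun m hm => if_neg (by simpa [Nat.lt_succ_iff] using hm)
  rw [← (hshift ▸ hf : Summable _).sum_add_tsum_nat_add', hrange, zero_add, hshift]

theorem tendsto_tsum_ite_lt_atTop {h : ℕ → ℝ} (hsum : Summable h) :
    Tendsto (fun n => ∑' m, if n < m then h m else 0) atTop (𝓝 0) := by
  have hshift : ∀ n, Summable fun k => h (k + (n + 1)) := fun n =>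
    (summable_nat_add_iff (n + 1)).2 hsum
  simp only [tsum_ite_lt_eq_tsum_nat_add (hshift _)]
  exact (tendsto_sum_nat_add h).comp (tendsto_add_atTop_nat 1)

theorem Nat.forall_of_forall_ge_of_forall_gt {p : ℕ → Prop} {N : ℕ} (hN : ∀ n, N ≤ n → p n)
    (hstep : ∀ n, (∀ m, n < m → p m) → p n) (n : ℕ) : p n := by
  suffices ∀ k n, N ≤ n + k → p n from this N n (by omega)
  intro k
  induction k with
  | zero => exact hN
  | succ k ih => exact fun n _ => hstep n fun m hm => ih m (by omega)

section WeightedTail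

variable {h a : ℕ → ℝ} {C : ℝ}

theorem summable_ite_lt_mul (hh : ∀ m, 0 ≤ h m) (hsum : Summable h) (ha : ∀ m, 0 ≤ a m)
    (haC : ∀ m, a m ≤ C) (n : ℕ) : Summable fun m => if n < m then h m * a m else 0 := by
  refine (hsum.mul_right C).of_nonneg_of_le (fun m => ?_) (fun m => ?_) <;> split_ifs
  exacts [mul_nonneg (hh m) (ha m), le_rfl, mul_le_mul_of_nonneg_left (haC m) (hh m),
    mul_nonneg (hh m) ((ha m).trans (haC m))]

theorem tsum_ite_lt_mul_le (hh : ∀ m, 0 ≤ h m) (hsum : Summable h) (ha : ∀ m, 0 ≤ a m)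
    (haC : ∀ m, a m ≤ C) {n : ℕ} {B : ℝ} (haB : ∀ m, n < m → a m ≤ B) :
    ∑' m, (if n < m then h m * a m else 0) ≤ B * ∑' m, if n < m then h m else 0 := by
  have htail : Summable fun m => if n < m then h m else 0 := by
    simpa using summable_ite_lt_mul hh hsum (fun _ => zero_le_one) (fun _ => le_rfl) n
  rw [← htail.tsum_mul_left]
  refine (summable_ite_lt_mul hh hsum ha haC n).tsum_le_tsum (fun m => ?_) (htail.mul_left B)
  split_ifs with hm
  · rw [mul_comm B]; exact mul_le_mul_of_nonneg_left (haB m hm) (hh m)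
  · simp

theorem exists_forall_ge_eq_zero_of_le_tsum_ite_lt_mul (hh : ∀ m, 0 ≤ h m) (hsum : Summable h)
    (ha : ∀ m, 0 ≤ a m) (haC : ∀ m, a m ≤ C)
    (hle : ∀ n, a n ≤ ∑' m, if n < m then h m * a m else 0) :
    ∃ N, ∀ n, N ≤ n → a n = 0 := by
  obtain ⟨N, hN⟩ := eventually_atTop.1 <|
    (tendsto_tsum_ite_lt_atTop hsum).eventually (ge_mem_nhds one_half_pos)
  have hC : 0 ≤ C := (ha 0).trans (haC 0)
  have decay : ∀ k, ∀ n, N ≤ n → a n ≤ C * (1 / 2) ^ k := by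
    intro k
    induction k with
    | zero => simpa using fun n _ => haC n
    | succ k ih =>
      intro n hn
      calc a n ≤ ∑' m, (if n < m then h m * a m else 0) := hle n
        _ ≤ C * (1 / 2) ^ k * ∑' m, (if n < m then h m else 0) :=
          tsum_ite_lt_mul_le hh hsum ha haC fun m hm => ih m (by omega)
        _ ≤ C * (1 / 2) ^ k * (1 / 2) := by gcongr; exact hN n hn
        _ = C * (1 / 2) ^ (k + 1) := by ring
  refine ⟨N, fun n hn => le_antisymm ?_ (ha n)⟩
  have hlim : Tendsto (fun k => C * (1 / 2 : ℝ) ^ k) atTop (𝓝 0) := by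
    simpa using (tendsto_pow_atTop_nhds_zero_of_lt_one (by norm_num) one_half_lt_one).const_mul C
  exact ge_of_tendsto' hlim fun k => decay k n hn

theorem eq_zero_of_le_tsum_ite_lt_mul (hh : ∀ m, 0 ≤ h m) (hsum : Summable h)
    (ha : ∀ m, 0 ≤ a m) (haC : ∀ m, a m ≤ C)
    (hle : ∀ n, a n ≤ ∑' m, if n < m then h m * a m else 0) (n : ℕ) : a n = 0 := by
  obtain ⟨N, hN⟩ := exists_forall_ge_eq_zero_of_le_tsum_ite_lt_mul hh hsum ha haC hle
  refine Nat.forall_of_forall_ge_of_forall_gt hN (fun n hzero => le_antisymm ?_ (ha n)) n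
  calc a n ≤ ∑' m, (if n < m then h m * a m else 0) := hle n
    _ = 0 := by simp +contextual [hzero]

end WeightedTail

section Volterra

variable {A : Type*} [NormedRing A] {K : ℕ → ℕ → A} {h : ℕ → ℝ} {C : ℝ}

theorem norm_le_tsum_ite_lt_mul_norm (hh : ∀ m, 0 ≤ h m) (hsum : Summable h)
    (hK : ∀ n m, n < m → ‖K n m‖ ≤ h m) {v : ℕ → A} (hvC : ∀ n, ‖v n‖ ≤ C)
    (hv : ∀ n, v n = ∑' m, if n < m then K n m * v m else 0) (n : ℕ) :
    ‖v n‖ ≤ ∑' m, if n < m then h m * ‖v m‖ else 0 := by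
  rw [hv n]
  refine tsum_of_norm_bounded
    (summable_ite_lt_mul hh hsum (fun _ => norm_nonneg _) hvC n).hasSum fun m => ?_
  split_ifs with hm
  · exact (norm_mul_le _ _).trans (mul_le_mul_of_nonneg_right (hK n m hm) (norm_nonneg _))
  · simp

theorem volterra_homogeneous_eq_zero (hh : ∀ m, 0 ≤ h m) (hsum : Summable h)
    (hK : ∀ n m, n < m → ‖K n m‖ ≤ h m) {v : ℕ → A} (hvC : ∀ n, ‖v n‖ ≤ C)
    (hv : ∀ n, v n = ∑' m, if n < m then K n m * v m else 0) (n : ℕ) : v n = 0 :=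
  norm_eq_zero.1 <| eq_zero_of_le_tsum_ite_lt_mul hh hsum (fun _ => norm_nonneg _) hvC
    (norm_le_tsum_ite_lt_mul_norm hh hsum hK hvC hv) n

theorem volterra_inhomogeneous_unique (hh : ∀ m, 0 ≤ h m) (hsum : Summable h)
    (hK : ∀ n m, n < m → ‖K n m‖ ≤ h m) {f u₁ u₂ : ℕ → A} {C₁ C₂ : ℝ}
    (hu₁C : ∀ n, ‖u₁ n‖ ≤ C₁) (hu₂C : ∀ n, ‖u₂ n‖ ≤ C₂)
    (hs₁ : ∀ n, Summable fun m => if n < m then K n m * u₁ m else 0)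
    (hs₂ : ∀ n, Summable fun m => if n < m then K n m * u₂ m else 0)
    (hu₁ : ∀ n, u₁ n = f n + ∑' m, if n < m then K n m * u₁ m else 0)
    (hu₂ : ∀ n, u₂ n = f n + ∑' m, if n < m then K n m * u₂ m else 0) : u₁ = u₂ := by
  have hsub : ∀ n m, (if n < m then K n m * (u₁ - u₂) m else 0)
      = (if n < m then K n m * u₁ m else 0) - (if n < m then K n m * u₂ m else 0) := by
    intro n m
    split_ifs <;> simp [mul_sub]
  have hdiff : ∀ n, (u₁ - u₂) n = ∑' m, if n < m then K n m * (u₁ - u₂) m else 0 := by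
    intro n
    rw [tsum_congr (hsub n), (hs₁ n).tsum_sub (hs₂ n), Pi.sub_apply, hu₁ n, hu₂ n]
    abel
  funext n
  exact sub_eq_zero.1 <| volterra_homogeneous_eq_zero hh hsum hK
    (fun n => (norm_sub_le _ _).trans (add_le_add (hu₁C n) (hu₂C n))) hdiff n

end Volterra

/-- Uniqueness for the discrete Volterra equation: any bounded solution of the
homogeneous equation `v_n = ∑_{m>n} G_{n,m} R_m v_m` vanishes identically;
consequently the bounded solution of the inhomogeneous equation
`u_n = 1 + ∑_{m>n} G_{n,m} R_m u_m` is unique. -/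
theorem volterra_solution_unique (G : ℕ → ℕ → ℂ) (R : ℕ → ℂ) (h : ℕ → ℝ)
    (hpos : ∀ m, 0 ≤ h m) (hsum : Summable h)
    (hGR : ∀ n m : ℕ, n + 1 ≤ m → ‖G n m * R m‖ ≤ h m) :
    (∀ v : ℕ → ℂ, (∃ C : ℝ, ∀ n, ‖v n‖ ≤ C) →
      (∀ n : ℕ, Summable (fun m : ℕ => if n < m then G n m * R m * v m else 0)) →
      (∀ n : ℕ, v n = ∑' m : ℕ, if n < m then G n m * R m * v m else 0) →
      ∀ n, v n = 0) ∧
    (∀ u₁ u₂ : ℕ → ℂ,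
      (∃ C : ℝ, ∀ n, ‖u₁ n‖ ≤ C) → (∃ C : ℝ, ∀ n, ‖u₂ n‖ ≤ C) →
      (∀ n : ℕ, Summable (fun m : ℕ => if n < m then G n m * R m * u₁ m else 0)) →
      (∀ n : ℕ, Summable (fun m : ℕ => if n < m then G n m * R m * u₂ m else 0)) →
      (∀ n : ℕ, u₁ n = 1 + ∑' m : ℕ, if n < m then G n m * R m * u₁ m else 0) →
      (∀ n : ℕ, u₂ n = 1 + ∑' m : ℕ, if n < m then G n m * R m * u₂ m else 0) →
      u₁ = u₂) := by
  constructor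
  · rintro v ⟨C, hvC⟩ - hv
    exact volterra_homogeneous_eq_zero (K := fun n m => G n m * R m) hpos hsum hGR hvC hv
  · rintro u₁ u₂ ⟨C₁, hu₁C⟩ ⟨C₂, hu₂C⟩ hs₁ hs₂ hu₁ hu₂
    exact volterra_inhomogeneous_unique (K := fun n m => G n m * R m) (f := fun _ => 1)
      hpos hsum hGR hu₁C hu₂C hs₁ hs₂ hu₁ hu₂
end

section
/- Let Λ_n ≠ 0, set X_n = Λ_1 Λ_2 ⋯ Λ_n and G_{n,m} = X_{m-1} ∑_{p=n}^{m-1} X_p^{-1} for m ≥ n+1. If (u_n) is a bounded solution of u_n = 1 + ∑_{m=n+1}^{∞} G_{n,m} R_m u_m (with the relevant series absolutely convergent), then u satisfies the identity u_{n+1} − u_n = −X_n^{-1} ∑_{m=n+1}^{∞} X_{m-1} R_m u_m, and hence the difference equation Λ_n(u_{n+1} − u_n) − (u_n − u_{n-1}) = R_n u_n. -/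
/-!
Subtracting the Volterra equations at `n` and `n + 1`, the kernel telescopes:
`G_{n,m} - G_{n+1,m} = X_{m-1} X_n⁻¹` for `m > n + 1`, and `G_{n,n+1} = 1`. This gives
`u_{n+1} - u_n = -X_n⁻¹ S_n` with `S_n = ∑_{m>n} X_{m-1} R_m u_m`. Peeling off the first term,
`S_{n-1} = X_{n-1} R_n u_n + S_n`, and with `X_n = X_{n-1} Λ_n` the identities at `n` and `n - 1`
combine into the second-order difference equation.
-/

open Finset

theorem Summable.tsum_ite_lt_eq_add {α : Type*} [AddCommGroup α] [TopologicalSpace α]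
    [IsTopologicalAddGroup α] [T2Space α] {a : ℕ → α} {n : ℕ}
    (h : Summable fun m => if n < m then a m else 0) :
    (∑' m, if n < m then a m else 0) = a (n + 1) + ∑' m, if n + 1 < m then a m else 0 := by
  rw [h.tsum_eq_add_tsum_ite (n + 1), if_pos n.lt_succ_self]
  congr 1
  refine tsum_congr fun m => ?_
  split_ifs <;> first | rfl | omega

section Green

variable {K : Type*} [Field K] {X : ℕ → K} {G : ℕ → ℕ → K}

theorem ite_green_sub_ite_green_succ
    (hG : ∀ n m : ℕ, n + 1 ≤ m → G n m = X (m - 1) * ∑ p ∈ Icc n (m - 1), (X p)⁻¹)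
    (c : ℕ → K) (n m : ℕ) :
    ((if n < m then G n m * c m else 0) - if n + 1 < m then G (n + 1) m * c m else 0)
      = (X n)⁻¹ * if n < m then X (m - 1) * c m else 0 := by
  rcases lt_trichotomy m (n + 1) with hm | rfl | hm
  · simp [show ¬n < m by omega, show ¬n + 1 < m by omega]
  · simp only [lt_add_one, lt_irrefl, if_true, if_false, hG n (n + 1) le_rfl, Nat.add_sub_cancel,
      Icc_self, sum_singleton]
    ring
  · rw [if_pos (by omega), if_pos hm, if_pos (by omega), hG n m (by omega), hG (n + 1) m hm,
      ← add_sum_Ioc_eq_sum_Icc (by omega), Icc_add_one_left_eq_Ioc]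
    ring

variable [TopologicalSpace K] [IsTopologicalRing K] [T2Space K]

theorem sub_succ_of_volterra
    (hG : ∀ n m : ℕ, n + 1 ≤ m → G n m = X (m - 1) * ∑ p ∈ Icc n (m - 1), (X p)⁻¹)
    {R u : ℕ → K} (hsum : ∀ n, Summable fun m => if n < m then G n m * R m * u m else 0)
    (heq : ∀ n, u n = 1 + ∑' m, if n < m then G n m * R m * u m else 0) (n : ℕ) :
    u (n + 1) - u n = -(X n)⁻¹ * ∑' m, if n < m then X (m - 1) * R m * u m else 0 := by
  have hkernel := ite_green_sub_ite_green_succ hG (fun m => R m * u m) n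
  simp only [← mul_assoc] at hkernel
  have hstep :
      u n - u (n + 1) = (X n)⁻¹ * ∑' m, if n < m then X (m - 1) * R m * u m else 0 := by
    rw [heq n, heq (n + 1), ← tsum_mul_left, ← tsum_congr hkernel,
      (hsum n).tsum_sub (hsum (n + 1))]
    ring
  linear_combination -hstep

end Green

theorem volterra_to_difference_general (Λ R : ℕ → ℂ) (hΛ : ∀ n, Λ n ≠ 0)
    (X : ℕ → ℂ) (hX : ∀ n, X n = ∏ i ∈ Finset.Icc 1 n, Λ i)
    (G : ℕ → ℕ → ℂ)
    (hG : ∀ n m : ℕ, n + 1 ≤ m → G n m = X (m - 1) * ∑ p ∈ Finset.Icc n (m - 1), (X p)⁻¹)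
    (u : ℕ → ℂ)
    (hsum : ∀ n : ℕ, Summable (fun m : ℕ => if n < m then G n m * R m * u m else 0))
    (hsum' : ∀ n : ℕ, Summable (fun m : ℕ => if n < m then X (m - 1) * R m * u m else 0))
    (heq : ∀ n : ℕ, u n = 1 + ∑' m : ℕ, if n < m then G n m * R m * u m else 0) :
    (∀ n : ℕ, u (n + 1) - u n
        = -(X n)⁻¹ * ∑' m : ℕ, if n < m then X (m - 1) * R m * u m else 0) ∧
    (∀ n : ℕ, 1 ≤ n →
        Λ n * (u (n + 1) - u n) - (u n - u (n - 1)) = R n * u n) := by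
  have hX_ne : ∀ n, X n ≠ 0 := fun n => by
    rw [hX]
    exact prod_ne_zero_iff.mpr fun i _ => hΛ i
  have hX_succ : ∀ k, X (k + 1) = X k * Λ (k + 1) := fun k => by
    rw [hX, hX, prod_Icc_succ_top (by omega)]
  have hdiff := sub_succ_of_volterra hG hsum heq
  refine ⟨hdiff, fun n hn => ?_⟩
  obtain ⟨k, rfl⟩ : ∃ k, n = k + 1 := ⟨n - 1, by omega⟩
  rw [hdiff (k + 1), Nat.add_sub_cancel, ← neg_sub, hdiff k, (hsum' k).tsum_ite_lt_eq_add,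
    hX_succ, Nat.add_sub_cancel]
  field_simp [hX_ne k, hΛ (k + 1)]
  ring

/-- From the Volterra equation back to the difference equation: with
`X_n = Λ_1⋯Λ_n`, `G_{n,m} = X_{m-1} ∑_{p=n}^{m-1} X_p⁻¹`, a bounded solution of
`u_n = 1 + ∑_{m>n} G_{n,m} R_m u_m` satisfies
`u_{n+1} − u_n = −X_n⁻¹ ∑_{m>n} X_{m-1} R_m u_m` and hence
`Λ_n(u_{n+1} − u_n) − (u_n − u_{n-1}) = R_n u_n`. -/
theorem volterra_to_difference (Λ R : ℕ → ℂ) (hΛ : ∀ n, Λ n ≠ 0)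
    (X : ℕ → ℂ) (hX : ∀ n, X n = ∏ i ∈ Finset.Icc 1 n, Λ i)
    (G : ℕ → ℕ → ℂ)
    (hG : ∀ n m : ℕ, n + 1 ≤ m → G n m = X (m - 1) * ∑ p ∈ Finset.Icc n (m - 1), (X p)⁻¹)
    (u : ℕ → ℂ) (hbdd : ∃ C : ℝ, ∀ n, ‖u n‖ ≤ C)
    (hsum : ∀ n : ℕ, Summable (fun m : ℕ => if n < m then G n m * R m * u m else 0))
    (hsum' : ∀ n : ℕ, Summable (fun m : ℕ => if n < m then X (m - 1) * R m * u m else 0))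
    (heq : ∀ n : ℕ, u n = 1 + ∑' m : ℕ, if n < m then G n m * R m * u m else 0) :
    (∀ n : ℕ, u (n + 1) - u n
        = -(X n)⁻¹ * ∑' m : ℕ, if n < m then X (m - 1) * R m * u m else 0) ∧
    (∀ n : ℕ, 1 ≤ n →
        Λ n * (u (n + 1) - u n) - (u n - u (n - 1)) = R n * u n) :=
  volterra_to_difference_general Λ R hΛ X hX G hG u hsum hsum' heq
end

section
/- Let L ≥ 2 and a_2, …, a_L be arbitrary complex numbers. Then there exist coefficients p_2, …, p_L such that the polynomial P_L(t) = ∑_{l=2}^{L} p_l t^l satisfies: the polynomial Q_L(t) := P_L(t) + ∑_{k=2}^{L} a_k (P_L(t) + t)^k has zero coefficients at t^j for all j = 0, 1, …, L (i.e., Q_L(t) is divisible by t^{L+1}). -/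
open Polynomial Finset

/-
Writing `Y = P + t`, the condition says `Y + ∑ a_k Y^k ≡ t` modulo `t^{L+1}`, so `Y` is the
truncated compositional inverse of `Y + ∑ a_k Y^k`. It is built one coefficient at a time: if the
defect `Q` of `P` vanishes modulo `t^n`, subtracting its `t^n`-coefficient from `P` kills the
`t^n`-coefficient of `Q`, and changes the terms `(P + t)^k`, `k ≥ 2`, only modulo `t^{n+1}`,
because `P + t` is divisible by `t`.
-/

theorem mul_dvd_pow_sub_pow_of_dvd {R : Type*} [CommRing R] {x y a b : R} (ha : x ∣ a)
    (hb : x ∣ b) (hab : y ∣ a - b) {k : ℕ} (hk : 2 ≤ k) : x * y ∣ a ^ k - b ^ k := by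
  rw [← geom_sum₂_mul]
  refine mul_dvd_mul (dvd_sum fun i _ => ?_) hab
  rcases Nat.eq_zero_or_pos i with rfl | hi
  · simpa using dvd_pow hb (by omega : k - 1 ≠ 0)
  · exact (dvd_pow ha hi.ne').mul_right _

theorem Polynomial.X_pow_succ_dvd_sub_monomial {R : Type*} [CommRing R] {p : R[X]} {n : ℕ}
    (h : X ^ n ∣ p) : X ^ (n + 1) ∣ p - monomial n (p.coeff n) := by
  rw [X_pow_dvd_iff] at h ⊢
  intro d hd
  rcases Nat.lt_succ_iff_lt_or_eq.mp hd with hd | rfl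
  · simp [coeff_monomial, h d hd, hd.ne']
  · simp

section Eikonal

variable {R : Type*} [CommRing R] (a : ℕ → R) (L : ℕ)

noncomputable def eikonalDefect (P : R[X]) : R[X] :=
  P + ∑ k ∈ Icc 2 L, C (a k) * (P + X) ^ k

theorem X_sq_dvd_eikonalDefect_zero : (X : R[X]) ^ 2 ∣ eikonalDefect a L 0 := by
  simp only [eikonalDefect, zero_add]
  exact dvd_sum fun k hk => (pow_dvd_pow X (mem_Icc.mp hk).1).mul_left _

theorem X_pow_succ_dvd_eikonalDefect_sub {P P' : R[X]} {n : ℕ} (hP : X ∣ P) (hP' : X ∣ P')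
    (h : X ^ n ∣ P' - P) :
    X ^ (n + 1) ∣ eikonalDefect a L P' - eikonalDefect a L P - (P' - P) := by
  have hdiff : eikonalDefect a L P' - eikonalDefect a L P - (P' - P) =
      ∑ k ∈ Icc 2 L, C (a k) * ((P' + X) ^ k - (P + X) ^ k) := by
    simp only [eikonalDefect, mul_sub, sum_sub_distrib]
    ring
  rw [hdiff, pow_succ']
  refine dvd_sum fun k hk => (mul_dvd_pow_sub_pow_of_dvd (dvd_add hP' dvd_rfl)
    (dvd_add hP dvd_rfl) ?_ (mem_Icc.mp hk).1).mul_left _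
  rwa [add_sub_add_right_eq_sub]

theorem X_dvd_of_support_subset_Icc {P : R[X]} (h : P.support ⊆ Icc 2 L) : X ∣ P :=
  X_dvd_iff.mpr <| notMem_support_iff.mp fun h0 => by simpa using h h0

theorem exists_support_subset_X_pow_dvd_eikonalDefect {n : ℕ} (h2 : 2 ≤ n) (hn : n ≤ L + 1) :
    ∃ P : R[X], P.support ⊆ Icc 2 L ∧ X ^ n ∣ eikonalDefect a L P := by
  induction n, h2 using Nat.le_induction with
  | base => exact ⟨0, by simp, X_sq_dvd_eikonalDefect_zero a L⟩
  | succ n h2 ih =>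
    obtain ⟨P, hsupp, hdvd⟩ := ih (by omega)
    set P' := P - monomial n ((eikonalDefect a L P).coeff n) with hP'
    have hsupp' : P'.support ⊆ Icc 2 L := fun l hl => by
      rw [mem_support_iff, coeff_sub, coeff_monomial] at hl
      by_cases hln : n = l
      · exact mem_Icc.mpr ⟨hln ▸ h2, by omega⟩
      · exact hsupp (mem_support_iff.mpr (by simpa [hln] using hl))
    have hstep : X ^ n ∣ P' - P := by
      rw [sub_sub_cancel_left, dvd_neg, ← C_mul_X_pow_eq_monomial]
      exact dvd_mul_left _ _
    have hcorr := X_pow_succ_dvd_eikonalDefect_sub a L (X_dvd_of_support_subset_Icc L hsupp)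
      (X_dvd_of_support_subset_Icc L hsupp') hstep
    refine ⟨P', hsupp', ?_⟩
    convert dvd_add hcorr (X_pow_succ_dvd_sub_monomial hdvd) using 1
    rw [hP']
    ring

end Eikonal

/-- Solution of the approximate eikonal equation (Lemma on polynomial
coefficients): for any `L ≥ 2` and numbers `a_2, …, a_L` there are coefficients
`p_2, …, p_L` such that, with `P_L(t) = ∑_{l=2}^{L} p_l t^l`, the polynomial
`Q_L(t) = P_L(t) + ∑_{k=2}^{L} a_k (P_L(t) + t)^k` is divisible by `t^{L+1}`. -/
theorem eikonal_polynomial_exists (L : ℕ) (hL : 2 ≤ L) (a : ℕ → ℂ) :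
    ∃ p : ℕ → ℂ, ∃ P : Polynomial ℂ,
      P = ∑ l ∈ Finset.Icc 2 L, C (p l) * X ^ l ∧
      (X : Polynomial ℂ) ^ (L + 1) ∣
        (P + ∑ k ∈ Finset.Icc 2 L, C (a k) * (P + X) ^ k) := by
  obtain ⟨P, hsupp, hdvd⟩ :=
    exists_support_subset_X_pow_dvd_eikonalDefect a L (by omega : 2 ≤ L + 1) le_rfl
  exact ⟨P.coeff, P,
    (sum_C_mul_X_pow_eq P).symm.trans (sum_eq_of_subset _ (by simp) hsupp), hdvd⟩
end

section
/- Let (x_n) be an absolutely summable sequence of complex numbers and (ϑ_n) a sequence of nonnegative reals with partial sums φ_n = ∑_{m=0}^{n} ϑ_m satisfying φ_n → ∞. Then e^{−φ_n} ∑_{m=0}^{n} x_m e^{φ_m} → 0 as n → ∞. -/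
/-!
The weighted sum equals `∑_{m ≤ n} e^{φ_m - φ_n} x_m`. Since `φ` is nondecreasing the weights lie
in `[0, 1]`, so the `m`-th term is dominated by `‖x_m‖`, and since `φ_n → ∞` each term tends to `0`;
Tannery's theorem (dominated convergence for series) concludes.
-/

open Filter Finset Topology

theorem tendsto_sum_range_smul_of_summable_norm {𝕜 E : Type*} [NormedField 𝕜]
    [NormedAddCommGroup E] [NormedSpace 𝕜 E] [CompleteSpace E] {x : ℕ → E}
    (hx : Summable (‖x ·‖)) {w : ℕ → ℕ → 𝕜} (hw_le : ∀ m n, m ≤ n → ‖w n m‖ ≤ 1)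
    (hw : ∀ m, Tendsto (w · m) atTop (𝓝 0)) :
    Tendsto (fun n => ∑ m ∈ range (n + 1), w n m • x m) atTop (𝓝 0) := by
  set F : ℕ → ℕ → E := fun n m => if m ≤ n then w n m • x m else 0
  have hF_lim : ∀ m, Tendsto (F · m) atTop (𝓝 0) := fun m => by
    refine ((hw m).smul_const (x m)).congr' ?_ |>.trans (by rw [zero_smul])
    filter_upwards [eventually_ge_atTop m] with n hn
    simp only [F, if_pos hn]
  have hF_le : ∀ n m, ‖F n m‖ ≤ ‖x m‖ := fun n m => by
    by_cases hmn : m ≤ n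
    · simpa only [F, if_pos hmn, norm_smul] using
        mul_le_of_le_one_left (norm_nonneg _) (hw_le m n hmn)
    · simp only [F, if_neg hmn, norm_zero, norm_nonneg]
  have key := tendsto_tsum_of_dominated_convergence hx hF_lim (.of_forall hF_le)
  rw [tsum_zero] at key
  refine key.congr fun n => ?_
  rw [tsum_eq_sum (s := range (n + 1)) fun m hm => if_neg (by simpa [Nat.lt_succ_iff] using hm)]
  exact sum_congr rfl fun m hm => if_pos (Nat.lt_succ_iff.mp (mem_range.mp hm))

/-- Weighted limit with exponentially growing weights: if `(x_n)` is absolutely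
summable, `ϑ_n ≥ 0`, and `φ_n = ∑_{m=0}^{n} ϑ_m → ∞`, then
`e^{−φ_n} ∑_{m=0}^{n} x_m e^{φ_m} → 0`. -/
theorem weighted_exp_limit (x : ℕ → ℂ) (hx : Summable fun n => ‖x n‖)
    (ϑ : ℕ → ℝ) (hϑ : ∀ n, 0 ≤ ϑ n)
    (φ : ℕ → ℝ) (hφ : ∀ n, φ n = ∑ m ∈ Finset.range (n + 1), ϑ m)
    (hphiTop : Tendsto φ atTop atTop) :
    Tendsto (fun n : ℕ =>
        (Real.exp (-φ n) : ℂ) * ∑ m ∈ Finset.range (n + 1), x m * Real.exp (φ m))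
      atTop (nhds 0) := by
  have hφ_mono : Monotone φ := monotone_nat_of_le_succ fun n => by
    rw [hφ, hφ, sum_range_succ _ (n + 1)]
    exact le_add_of_nonneg_right (hϑ _)
  have hw_le : ∀ m n, m ≤ n → ‖(Real.exp (φ m - φ n) : ℂ)‖ ≤ 1 := fun m n hmn => by
    rw [Complex.norm_real, Real.norm_of_nonneg (Real.exp_nonneg _), Real.exp_le_one_iff]
    exact sub_nonpos.mpr (hφ_mono hmn)
  have hw : ∀ m, Tendsto (fun n => (Real.exp (φ m - φ n) : ℂ)) atTop (𝓝 0) := fun m => by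
    have := Real.tendsto_exp_atBot.comp (tendsto_atBot_add_const_left _ (φ m)
      (tendsto_neg_atTop_atBot.comp hphiTop))
    simpa only [Function.comp_def, sub_eq_add_neg, Complex.ofReal_zero] using
      (Complex.continuous_ofReal.tendsto 0).comp this
  refine (tendsto_sum_range_smul_of_summable_norm hx hw_le hw).congr fun n => ?_
  rw [mul_sum]
  refine sum_congr rfl fun m _ => ?_
  rw [smul_eq_mul, sub_eq_neg_add, Real.exp_add, Complex.ofReal_mul]
  ring
end
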